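/- arXiv:math/9905057 — 3 statements merged into one kernel-verified Lean document; each statement's English description precedes it below -/
import Mathlib

section
/- If there is a direct link between two prime ideals of a noetherian ring, then the two primes have the same intersection with the center of the ring. -/
/-- If there is a direct link from the prime ideal `Qa` to the prime ideal `Qb` of a
noetherian ring `R` -- i.e. there is a (two-sided) ideal `J` with
`Qa * Qb ⊆ J ⊊ Qa ⊓ Qb` such that `(Qa ⊓ Qb)/J` is torsion-free as a left `R/Qa`-module
and as a right `R/Qb`-module -- then `Qa` and `Qb` have the same intersection with the
center of `R`. -/
theorem stmt_7 {R : Type*} [Ring R] [IsNoetherianRing R] [IsNoetherianRing Rᵐᵒᵖ]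
    (Qa Qb J : Ideal R)
    -- two-sidedness (Ideal = left ideal; require closure under right multiplication)
    (hQa2 : ∀ a ∈ Qa, ∀ r : R, a * r ∈ Qa)
    (hQb2 : ∀ a ∈ Qb, ∀ r : R, a * r ∈ Qb)
    (hJ2 : ∀ a ∈ J, ∀ r : R, a * r ∈ J)
    -- primeness
    (hQaprime : Qa ≠ ⊤ ∧ ∀ a b : R, (∀ r : R, a * r * b ∈ Qa) → a ∈ Qa ∨ b ∈ Qa)
    (hQbprime : Qb ≠ ⊤ ∧ ∀ a b : R, (∀ r : R, a * r * b ∈ Qb) → a ∈ Qb ∨ b ∈ Qb)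
    -- Qa * Qb ⊆ J ⊊ Qa ⊓ Qb
    (hprod : ∀ a ∈ Qa, ∀ b ∈ Qb, a * b ∈ J)
    (hJlt : J < Qa ⊓ Qb)
    -- (Qa ⊓ Qb)/J is torsion-free as a left `R/Qa`-module: elements of `R` regular
    -- modulo `Qa` act without torsion
    (htfleft : ∀ c : R, ((∀ r : R, c * r ∈ Qa → r ∈ Qa) ∧ (∀ r : R, r * c ∈ Qa → r ∈ Qa)) →
      ∀ x ∈ Qa ⊓ Qb, c * x ∈ J → x ∈ J)
    -- torsion-free as a right `R/Qb`-module
    (htfright : ∀ c : R, ((∀ r : R, c * r ∈ Qb → r ∈ Qb) ∧ (∀ r : R, r * c ∈ Qb → r ∈ Qb)) →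
      ∀ x ∈ Qa ⊓ Qb, x * c ∈ J → x ∈ J) :
    ∀ z ∈ Set.center R, (z ∈ Qa ↔ z ∈ Qb) := by
  intro z hz
  have hcomm : ∀ a : R, z * a = a * z := fun a => hz.comm a
  constructor
  · intro hza
    by_contra hzb
    have hreg : (∀ r : R, z * r ∈ Qb → r ∈ Qb) ∧ (∀ r : R, r * z ∈ Qb → r ∈ Qb) := by
      constructor
      · intro r hr
        rcases hQbprime.2 z r (fun s => by
          have h1 : z * s * r = s * (z * r) := by rw [hcomm s, mul_assoc]
          rw [h1]; exact Qb.mul_mem_left s hr) with h | h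
        · exact absurd h hzb
        · exact h
      · intro r hr
        rcases hQbprime.2 z r (fun s => by
          have h1 : z * s * r = s * (r * z) := by rw [hcomm s, mul_assoc, hcomm r]
          rw [h1]; exact Qb.mul_mem_left s hr) with h | h
        · exact absurd h hzb
        · exact h
    have hle : Qa ⊓ Qb ≤ J := by
      intro x hx
      apply htfright z hreg x hx
      have h1 : x * z = z * x := (hcomm x).symm
      rw [h1]
      exact hprod z hza x hx.2
    exact hJlt.not_ge hle
  · intro hzb
    by_contra hza
    have hreg : (∀ r : R, z * r ∈ Qa → r ∈ Qa) ∧ (∀ r : R, r * z ∈ Qa → r ∈ Qa) := by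
      constructor
      · intro r hr
        rcases hQaprime.2 z r (fun s => by
          have h1 : z * s * r = s * (z * r) := by rw [hcomm s, mul_assoc]
          rw [h1]; exact Qa.mul_mem_left s hr) with h | h
        · exact absurd h hza
        · exact h
      · intro r hr
        rcases hQaprime.2 z r (fun s => by
          have h1 : z * s * r = s * (r * z) := by rw [hcomm s, mul_assoc, hcomm r]
          rw [h1]; exact Qa.mul_mem_left s hr) with h | h
        · exact absurd h hza
        · exact h
    have hle : Qa ⊓ Qb ≤ J := by
      intro x hx
      apply htfleft z hreg x hx
      have h1 : z * x = x * z := hcomm x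
      rw [h1]
      exact hprod x hx.1 z hzb
    exact hJlt.not_ge hle
end

section
/- An ideal p of a Z/2-graded noetherian ring R is graded-prime if and only if there exists a prime ideal P of R with p = P ∩ σ(P), where σ is the parity automorphism. -/
/-- Let `R` be a `ℤ/2`-graded noetherian algebra over a field of characteristic ≠ 2, with
parity automorphism `σ` (graded ideals are the `σ`-stable ones).  A two-sided graded ideal
`p` of `R` is graded-prime (proper, and containing no product of two strictly larger
graded two-sided ideals) if and only if there exists a prime (two-sided) ideal `P` of `R`
with `p = P ∩ σ(P)`. -/
theorem stmt_11 {k R : Type*} [Field k] (hchar : (2 : k) ≠ 0)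
    [Ring R] [Algebra k R] [IsNoetherianRing R]
    (σ : R ≃ₐ[k] R) (hσ : ∀ r : R, σ (σ r) = r)
    (p : Ideal R) (hp2 : ∀ a ∈ p, ∀ r : R, a * r ∈ p) (hpσ : ∀ a ∈ p, σ a ∈ p) :
    ((p ≠ ⊤ ∧ ∀ A B : Ideal R,
        (∀ a ∈ A, ∀ r : R, a * r ∈ A) → (∀ a ∈ A, σ a ∈ A) →
        (∀ b ∈ B, ∀ r : R, b * r ∈ B) → (∀ b ∈ B, σ b ∈ B) →
        p < A → p < B → ∃ a ∈ A, ∃ b ∈ B, a * b ∉ p) ↔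
      (∃ P : Ideal R, (∀ a ∈ P, ∀ r : R, a * r ∈ P) ∧ P ≠ ⊤ ∧
        (∀ a b : R, (∀ r : R, a * r * b ∈ P) → a ∈ P ∨ b ∈ P) ∧
        ∀ x : R, x ∈ p ↔ (x ∈ P ∧ σ x ∈ P))) := by
  constructor
  · rintro ⟨hpne, hprime⟩
    -- the collection of two-sided ideals Q ⊇ p with Q ∩ σ⁻¹Q ⊆ p
    set S : Set (Ideal R) :=
      {Q | p ≤ Q ∧ (∀ a ∈ Q, ∀ r : R, a * r ∈ Q) ∧ ∀ x : R, x ∈ Q → σ x ∈ Q → x ∈ p} with hS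
    have hpS : p ∈ S := ⟨le_rfl, hp2, fun x hx _ => hx⟩
    -- pick a maximal element of S
    have hmax := (set_has_maximal_iff_noetherian (R := R) (M := R)).2
      (inferInstance) S ⟨p, hpS⟩
    obtain ⟨P, ⟨hpP, hP2, hPgr⟩, hPmax⟩ := hmax
    have hPne : P ≠ ⊤ := by
      intro h
      apply hpne
      rw [Ideal.eq_top_iff_one]
      have h1 : (1 : R) ∈ P := by rw [h]; trivial
      exact hPgr 1 h1 (by simpa using h1)
    refine ⟨P, hP2, hPne, ?_, fun x => ⟨fun hx => ⟨hpP hx, hpP (hpσ x hx)⟩,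
      fun ⟨h1, h2⟩ => hPgr x h1 h2⟩⟩
    -- primality
    intro a b hab
    by_contra hcon
    push_neg at hcon
    obtain ⟨ha, hb⟩ := hcon
    -- two-sided ideals generated by P together with a (resp. b)
    set A : Ideal R := P ⊔ Submodule.span R {x | ∃ s t : R, s * a * t = x} with hAdef
    set B : Ideal R := P ⊔ Submodule.span R {x | ∃ s t : R, s * b * t = x} with hBdef
    have haA : a ∈ A := by
      refine le_sup_right (α := Ideal R) ?_
      exact Submodule.subset_span ⟨1, 1, by rw [one_mul, mul_one]⟩
    have hbB : b ∈ B := by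
      refine le_sup_right (α := Ideal R) ?_
      exact Submodule.subset_span ⟨1, 1, by rw [one_mul, mul_one]⟩
    -- right-multiplication closure of spans
    have hspan2 : ∀ c : R, ∀ x ∈ Submodule.span R {x | ∃ s t : R, s * c * t = x},
        ∀ r : R, x * r ∈ Submodule.span R {x | ∃ s t : R, s * c * t = x} := by
      intro c x hx r
      induction hx using Submodule.span_induction with
      | mem y hy =>
        obtain ⟨s, t, rfl⟩ := hy
        exact Submodule.subset_span ⟨s, t * r, by rw [← mul_assoc]⟩
      | zero => simpa using Submodule.zero_mem _
      | add y z _ _ hy hz => rw [add_mul]; exact Submodule.add_mem _ hy hz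
      | smul m y _ hy => rw [smul_mul_assoc]; exact Submodule.smul_mem _ _ hy
    have hA2 : ∀ x ∈ A, ∀ r : R, x * r ∈ A := by
      intro x hx r
      rw [hAdef] at hx ⊢
      obtain ⟨u, hu, v, hv, rfl⟩ := Submodule.mem_sup.1 hx
      rw [add_mul]
      exact Submodule.add_mem _ (le_sup_left (α := Ideal R) (hP2 u hu r))
        (le_sup_right (α := Ideal R) (hspan2 a v hv r))
    have hB2 : ∀ x ∈ B, ∀ r : R, x * r ∈ B := by
      intro x hx r
      rw [hBdef] at hx ⊢
      obtain ⟨u, hu, v, hv, rfl⟩ := Submodule.mem_sup.1 hx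
      rw [add_mul]
      exact Submodule.add_mem _ (le_sup_left (α := Ideal R) (hP2 u hu r))
        (le_sup_right (α := Ideal R) (hspan2 b v hv r))
    -- A * B ⊆ P
    have hinner : ∀ y ∈ Submodule.span R {x | ∃ s t : R, s * b * t = x},
        ∀ s t : R, s * a * t * y ∈ P := by
      intro y hy
      induction hy using Submodule.span_induction with
      | mem v hv =>
        intro s t
        obtain ⟨s', t', rfl⟩ := hv
        have heq : s * a * t * (s' * b * t') = s * (a * (t * s') * b) * t' := by
          simp only [mul_assoc]
        rw [heq]
        exact hP2 _ (Submodule.smul_mem P s (hab (t * s'))) t'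
      | zero => intro s t; rw [mul_zero]; exact Submodule.zero_mem P
      | add v w _ _ hv hw =>
        intro s t; rw [mul_add]; exact Submodule.add_mem _ (hv s t) (hw s t)
      | smul m v _ hv =>
        intro s t
        rw [smul_eq_mul, show s * a * t * (m * v) = s * a * (t * m) * v by
          simp only [mul_assoc]]
        exact hv s (t * m)
    have hspanspan : ∀ x ∈ Submodule.span R {x | ∃ s t : R, s * a * t = x},
        ∀ y ∈ Submodule.span R {x | ∃ s t : R, s * b * t = x}, x * y ∈ P := by
      intro x hx y hy
      induction hx using Submodule.span_induction with
      | mem u hu =>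
        obtain ⟨s, t, rfl⟩ := hu
        exact hinner y hy s t
      | zero => rw [zero_mul]; exact Submodule.zero_mem P
      | add u v _ _ hu hv => rw [add_mul]; exact Submodule.add_mem _ hu hv
      | smul m u _ hu => rw [smul_mul_assoc]; exact Submodule.smul_mem _ _ hu
    have hAB : ∀ x ∈ A, ∀ y ∈ B, x * y ∈ P := by
      intro x hx y hy
      rw [hAdef] at hx; rw [hBdef] at hy
      obtain ⟨u, hu, v, hv, rfl⟩ := Submodule.mem_sup.1 hx
      obtain ⟨u', hu', v', hv', rfl⟩ := Submodule.mem_sup.1 hy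
      have h1 : u * (u' + v') ∈ P := hP2 u hu _
      have h2 : v * u' ∈ P := Submodule.smul_mem P v hu'
      have h3 : v * v' ∈ P := hspanspan v hv v' hv'
      have : (u + v) * (u' + v') = u * (u' + v') + v * u' + v * v' := by noncomm_ring
      rw [this]
      exact Submodule.add_mem _ (Submodule.add_mem _ h1 h2) h3
    -- A and B are strictly above P hence not in S
    have hPA : P < A := lt_of_le_of_ne le_sup_left (fun h => ha (h ▸ haA))
    have hPB : P < B := lt_of_le_of_ne le_sup_left (fun h => hb (h ▸ hbB))
    have hAnotS : A ∉ S := fun h => hPmax A h hPA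
    have hBnotS : B ∉ S := fun h => hPmax B h hPB
    -- hence their graded parts strictly contain p
    have hAwit : ∃ x : R, x ∈ A ∧ σ x ∈ A ∧ x ∉ p := by
      by_contra h
      push_neg at h
      exact hAnotS ⟨hpP.trans hPA.le, hA2, fun x hx hsx => h x hx hsx⟩
    have hBwit : ∃ x : R, x ∈ B ∧ σ x ∈ B ∧ x ∉ p := by
      by_contra h
      push_neg at h
      exact hBnotS ⟨hpP.trans hPB.le, hB2, fun x hx hsx => h x hx hsx⟩
    obtain ⟨xA, hxA, hsxA, hxAp⟩ := hAwit
    obtain ⟨xB, hxB, hsxB, hxBp⟩ := hBwit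
    -- the graded ideals gr(A), gr(B)
    let grA : Ideal R :=
      { carrier := {x | x ∈ A ∧ σ x ∈ A}
        add_mem' := fun hx hy => ⟨Submodule.add_mem _ hx.1 hy.1, by
          rw [map_add]; exact Submodule.add_mem _ hx.2 hy.2⟩
        zero_mem' := ⟨Submodule.zero_mem _, by rw [map_zero]; exact Submodule.zero_mem _⟩
        smul_mem' := fun r x hx => ⟨Submodule.smul_mem _ _ hx.1, by
          rw [smul_eq_mul, map_mul]; exact Submodule.smul_mem _ _ hx.2⟩ }
    let grB : Ideal R :=
      { carrier := {x | x ∈ B ∧ σ x ∈ B}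
        add_mem' := fun hx hy => ⟨Submodule.add_mem _ hx.1 hy.1, by
          rw [map_add]; exact Submodule.add_mem _ hx.2 hy.2⟩
        zero_mem' := ⟨Submodule.zero_mem _, by rw [map_zero]; exact Submodule.zero_mem _⟩
        smul_mem' := fun r x hx => ⟨Submodule.smul_mem _ _ hx.1, by
          rw [smul_eq_mul, map_mul]; exact Submodule.smul_mem _ _ hx.2⟩ }
    have hgrA2 : ∀ x ∈ grA, ∀ r : R, x * r ∈ grA := by
      rintro x ⟨hx1, hx2⟩ r
      exact ⟨hA2 x hx1 r, by rw [map_mul]; exact hA2 _ hx2 _⟩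
    have hgrB2 : ∀ x ∈ grB, ∀ r : R, x * r ∈ grB := by
      rintro x ⟨hx1, hx2⟩ r
      exact ⟨hB2 x hx1 r, by rw [map_mul]; exact hB2 _ hx2 _⟩
    have hgrAσ : ∀ x ∈ grA, σ x ∈ grA := by
      rintro x ⟨hx1, hx2⟩
      exact ⟨hx2, by rw [hσ]; exact hx1⟩
    have hgrBσ : ∀ x ∈ grB, σ x ∈ grB := by
      rintro x ⟨hx1, hx2⟩
      exact ⟨hx2, by rw [hσ]; exact hx1⟩
    have hpgrA : p < grA := by
      refine lt_of_le_of_ne (fun x hx => ⟨(hpP.trans hPA.le) hx,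
        (hpP.trans hPA.le) (hpσ x hx)⟩) ?_
      intro h
      exact hxAp (h ▸ (show xA ∈ grA from ⟨hxA, hsxA⟩))
    have hpgrB : p < grB := by
      refine lt_of_le_of_ne (fun x hx => ⟨(hpP.trans hPB.le) hx,
        (hpP.trans hPB.le) (hpσ x hx)⟩) ?_
      intro h
      exact hxBp (h ▸ (show xB ∈ grB from ⟨hxB, hsxB⟩))
    obtain ⟨x, hxgrA, y, hygrB, hxy⟩ :=
      hprime grA grB hgrA2 hgrAσ hgrB2 hgrBσ hpgrA hpgrB
    apply hxy
    have h1 : x * y ∈ P := hAB x hxgrA.1 y hygrB.1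
    have h2 : σ (x * y) ∈ P := by
      rw [map_mul]; exact hAB _ hxgrA.2 _ hygrB.2
    exact hPgr _ h1 h2
  · rintro ⟨P, hP2, hPne, hPprime, hPp⟩
    constructor
    · intro h
      apply hPne
      rw [Ideal.eq_top_iff_one]
      exact ((hPp 1).1 (h ▸ (trivial : (1:R) ∈ (⊤ : Ideal R)))).1
    · intro A B hA2 hAσ hB2 hBσ hpA hpB
      by_contra h
      push_neg at h
      -- every a ∈ A, b ∈ B satisfies a ∈ P ∨ b ∈ P
      have key : ∀ a ∈ A, ∀ b ∈ B, a ∈ P ∨ b ∈ P := by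
        intro a haA b hbB
        refine hPprime a b fun r => ?_
        exact ((hPp _).1 (h (a * r) (hA2 a haA r) b hbB)).1
      -- if A ⊆ P then A ⊆ p, contradiction
      have hsub : ∀ (C : Ideal R), (∀ c ∈ C, σ c ∈ C) → (C : Set R) ⊆ P → C ≤ p := by
        intro C hCσ hCP x hx
        exact (hPp x).2 ⟨hCP hx, hCP (hCσ x hx)⟩
      by_cases hAP : (A : Set R) ⊆ P
      · exact absurd (hsub A hAσ hAP) (not_le_of_gt hpA)
      · obtain ⟨a₀, ha₀A, ha₀P⟩ := Set.not_subset.1 hAP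
        have hBP : (B : Set R) ⊆ P := by
          intro b hbB
          rcases key a₀ ha₀A b hbB with h' | h'
          · exact absurd h' ha₀P
          · exact h'
        exact absurd (hsub B hBσ hBP) (not_le_of_gt hpB)
end

section
/- A graded ideal p of a Z/2-graded noetherian algebra R is graded-primitive if and only if there exists a (left) primitive ideal P of R with p = P ∩ σ(P). -/
/-!
Let `M` be graded-simple with parity `f`. Being finitely generated (by any `x ≠ 0` and `f x`), `M`
has a maximal submodule `N`; then `N ∩ f⁻¹(N)` is a proper graded submodule, hence zero, and this
reads `Ann M = P ∩ σ⁻¹(P)` for the primitive ideal `P = Ann (M ⧸ N)`.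

Conversely, for a simple module `L` with annihilator `P`, let `L ^ σ` be `L` with the action
twisted by `σ`. The swap of `L × L ^ σ` is a parity, and `Ann (L × L ^ σ) = P ∩ σ⁻¹(P)`. Either
`L × L ^ σ` is graded-simple, or it has a proper nonzero graded submodule `N`; such an `N` meets
both factors trivially, so it is isomorphic to `L` by the first projection. Then `N` is
graded-simple with annihilator `P`, which is `σ`-stable as the annihilator of a graded module.
-/

open Function

universe u

section Graded

variable {R M : Type*} [Ring R] [AddCommGroup M] [Module R M] {σ : R →+* R}

/-- A `ℤ/2`-grading of `M` is encoded by its parity `f`, a `σ`-semilinear involution; the graded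
submodules are the `f`-stable ones. -/
def IsGradedSimple (f : M →ₛₗ[σ] M) : Prop :=
  Nontrivial M ∧ ∀ N : Submodule R M, N ≠ ⊥ → (∀ x ∈ N, f x ∈ N) → N = ⊤

theorem isGradedSimple_of_isSimpleModule [IsSimpleModule R M] (f : M →ₛₗ[σ] M) :
    IsGradedSimple f :=
  ⟨IsSimpleModule.nontrivial R M, fun N hN _ => (eq_bot_or_eq_top N).resolve_left hN⟩

theorem map_mem_annihilator {f : M →ₛₗ[σ] M} (hf : Surjective f) {r : R}
    (hr : r ∈ Module.annihilator R M) : σ r ∈ Module.annihilator R M := by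
  rw [Module.mem_annihilator] at hr ⊢
  intro m
  obtain ⟨m, rfl⟩ := hf m
  rw [← f.map_smulₛₗ, hr, map_zero]

theorem Module.Finite.of_isGradedSimple {f : M →ₛₗ[σ] M} (hf : Involutive f)
    (hM : IsGradedSimple f) : Module.Finite R M := by
  obtain ⟨_, hgr⟩ := hM
  obtain ⟨x, hx⟩ := exists_ne (0 : M)
  let K := Submodule.span R ({x, f x} : Set M)
  have hstable : K ≤ K.comap f := by
    rw [Submodule.span_le, Set.insert_subset_iff, Set.singleton_subset_iff]
    exact ⟨Submodule.subset_span (by simp),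
      show f (f x) ∈ K by rw [hf x]; exact Submodule.subset_span (by simp)⟩
  have hne : K ≠ ⊥ := fun h =>
    hx <| (Submodule.eq_bot_iff _).mp h x (Submodule.subset_span (by simp))
  exact ⟨Submodule.fg_def.mpr ⟨_, Set.toFinite _, hgr K hne fun _ hy => hstable hy⟩⟩

theorem Submodule.mem_annihilator_quotient {N : Submodule R M} {r : R} :
    r ∈ Module.annihilator R (M ⧸ N) ↔ ∀ m : M, r • m ∈ N := by
  simp [Submodule.annihilator_quotient, Submodule.mem_colon]

theorem mem_annihilator_iff_of_isGradedSimple {f : M →ₛₗ[σ] M} (hf : Involutive f)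
    (hM : IsGradedSimple f) {N : Submodule R M} (hN : N ≠ ⊤) (r : R) :
    r ∈ Module.annihilator R M ↔
      r ∈ Module.annihilator R (M ⧸ N) ∧ σ r ∈ Module.annihilator R (M ⧸ N) := by
  have hann : Module.annihilator R M ≤ Module.annihilator R (M ⧸ N) :=
    N.mkQ.annihilator_le_of_surjective N.mkQ_surjective
  refine ⟨fun hr => ⟨hann hr, hann (map_mem_annihilator hf.surjective hr)⟩, ?_⟩
  rintro ⟨hr, hσr⟩
  rw [Submodule.mem_annihilator_quotient] at hr hσr
  have hbot : N ⊓ N.comap f = ⊥ := by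
    by_contra hne
    refine hN (top_le_iff.mp ((hM.2 _ hne ?_).symm ▸ inf_le_left))
    rintro x ⟨hx, hfx⟩
    exact ⟨hfx, by simpa [hf x] using hx⟩
  rw [Module.mem_annihilator]
  intro m
  have hmem : r • m ∈ N ⊓ N.comap f := ⟨hr m, by simpa [f.map_smulₛₗ] using hσr (f m)⟩
  rwa [hbot, Submodule.mem_bot] at hmem

end Graded

section Twist

variable {R : Type*} [Ring R] (σ : R →+* R) (L : Type u) [AddCommGroup L] [Module R L]

/-- The module `L ^ σ`: `L` with `r` acting as `σ r`. -/
def Twist (_σ : R →+* R) (L : Type*) : Type _ := L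

instance : AddCommGroup (Twist σ L) := ‹AddCommGroup L›

instance : Module R (Twist σ L) := Module.compHom L σ

variable {σ L}

theorem mem_annihilator_twist {r : R} :
    r ∈ Module.annihilator R (Twist σ L) ↔ σ r ∈ Module.annihilator R L :=
  Iff.rfl

def swapTwist (hσ : Involutive σ) : (L × Twist σ L) →ₛₗ[σ] (L × Twist σ L) where
  toFun z := (z.2, z.1)
  map_add' _ _ := rfl
  map_smul' r z := Prod.ext rfl (show r • z.1 = σ (σ r) • z.1 by rw [hσ])

theorem swapTwist_involutive (hσ : Involutive σ) : Involutive (swapTwist (L := L) hσ) :=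
  fun _ => rfl

theorem mem_annihilator_prod_twist {r : R} :
    r ∈ Module.annihilator R (L × Twist σ L) ↔
      r ∈ Module.annihilator R L ∧ σ r ∈ Module.annihilator R L := by
  rw [Module.annihilator_prod, Submodule.mem_inf, mem_annihilator_twist]

variable [IsSimpleModule R L] (hσ : Involutive σ)
include hσ

theorem eq_zero_of_mk_zero_mem {N : Submodule R (L × Twist σ L)}
    (hstable : ∀ z ∈ N, swapTwist hσ z ∈ N) (htop : N ≠ ⊤) {l : L} (hl : (l, 0) ∈ N) :
    l = 0 := by
  rcases eq_bot_or_eq_top (N.comap (LinearMap.inl R L (Twist σ L))) with h | h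
  · simpa using (Submodule.eq_bot_iff _).mp h l hl
  · refine absurd (Submodule.eq_top_iff'.mpr fun z => ?_) htop
    have hinl (a : L) : (a, 0) ∈ N := Submodule.eq_top_iff'.mp h a
    convert N.add_mem (hinl z.1) (hstable _ (hinl z.2)) using 1
    exact Prod.ext (add_zero _).symm (zero_add _).symm

theorem bijective_fst_comp_subtype {N : Submodule R (L × Twist σ L)}
    (hstable : ∀ z ∈ N, swapTwist hσ z ∈ N) (hbot : N ≠ ⊥) (htop : N ≠ ⊤) :
    Bijective (LinearMap.fst R L (Twist σ L) ∘ₗ N.subtype) := by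
  have hinj : Injective (LinearMap.fst R L (Twist σ L) ∘ₗ N.subtype) := by
    refine (injective_iff_map_eq_zero _).mpr ?_
    rintro ⟨⟨a, b⟩, hz⟩ (rfl : a = 0)
    obtain rfl : b = 0 := eq_zero_of_mk_zero_mem hσ hstable htop (hstable _ hz)
    rfl
  refine ⟨hinj, LinearMap.range_eq_top.mp ((eq_bot_or_eq_top _).resolve_left fun h => hbot ?_)⟩
  refine (Submodule.eq_bot_iff _).mpr fun z hz => ?_
  have hz0 : (LinearMap.fst R L (Twist σ L) ∘ₗ N.subtype) ⟨z, hz⟩ = 0 :=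
    (Submodule.eq_bot_iff _).mp h _ (LinearMap.mem_range_self _ _)
  simpa using hinj (hz0.trans (map_zero _).symm)

theorem exists_isGradedSimple_annihilator_eq :
    ∃ (M : Type u) (_ : AddCommGroup M) (_ : Module R M) (f : M →ₛₗ[σ] M),
      Involutive f ∧ IsGradedSimple f ∧ ∀ r : R,
        r ∈ Module.annihilator R M ↔
          r ∈ Module.annihilator R L ∧ σ r ∈ Module.annihilator R L := by
  by_cases hgr : ∀ N : Submodule R (L × Twist σ L), N ≠ ⊥ → (∀ z ∈ N, swapTwist hσ z ∈ N) → N = ⊤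
  · have : Nontrivial L := IsSimpleModule.nontrivial R L
    exact ⟨L × Twist σ L, inferInstance, inferInstance, swapTwist hσ, swapTwist_involutive hσ,
      ⟨inferInstance, hgr⟩, fun _ => mem_annihilator_prod_twist⟩
  push Not at hgr
  obtain ⟨N, hbot, hstable, htop⟩ := hgr
  let e : N ≃ₗ[R] L := .ofBijective _ (bijective_fst_comp_subtype hσ hstable hbot htop)
  have : IsSimpleModule R N := IsSimpleModule.congr e
  let f : N →ₛₗ[σ] N := (swapTwist hσ).restrict hstable
  have hf : Involutive f := fun _ => rfl
  refine ⟨N, inferInstance, inferInstance, f, hf, isGradedSimple_of_isSimpleModule f, fun r => ?_⟩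
  rw [e.annihilator_eq]
  refine ⟨fun hr => ⟨hr, ?_⟩, And.left⟩
  rw [← e.annihilator_eq] at hr ⊢
  exact map_mem_annihilator hf.surjective hr

end Twist

theorem stmt_12_general {k R : Type} [Field k]
    [Ring R] [Algebra k R]
    (σ : R ≃ₐ[k] R) (hσ : ∀ r : R, σ (σ r) = r)
    (p : Ideal R) :
    ((∃ (M : Type) (_ : AddCommGroup M) (_ : Module R M) (σM : M ≃+ M),
        (∀ (r : R) (x : M), σM (r • x) = σ r • σM x) ∧ (∀ x : M, σM (σM x) = x) ∧
        Nontrivial M ∧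
        (∀ N : Submodule R M, N ≠ ⊥ → (∀ x ∈ N, σM x ∈ N) → N = ⊤) ∧
        Module.annihilator R M = p) ↔
      (∃ P : Ideal R,
        (∃ (L : Type) (_ : AddCommGroup L) (_ : Module R L),
          IsSimpleModule R L ∧ Module.annihilator R L = P) ∧
        ∀ x : R, x ∈ p ↔ (x ∈ P ∧ σ x ∈ P))) := by
  constructor
  · rintro ⟨M, _, _, σM, hc, hi, hnt, hgr, rfl⟩
    let f : M →ₛₗ[(σ : R →+* R)] M := { σM.toAddMonoidHom with map_smul' := hc }
    have hf : Involutive f := hi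
    have hM : IsGradedSimple f := ⟨hnt, hgr⟩
    have := Module.Finite.of_isGradedSimple hf hM
    obtain ⟨N, hN⟩ := IsCoatomic.exists_coatom (α := Submodule R M)
    exact ⟨_, ⟨M ⧸ N, _, _, isSimpleModule_iff_isCoatom.mpr hN, rfl⟩,
      mem_annihilator_iff_of_isGradedSimple hf hM hN.1⟩
  · rintro ⟨P, ⟨L, _, _, _, rfl⟩, hp⟩
    obtain ⟨M, _, _, f, hf, ⟨hnt, hgr⟩, hann⟩ :=
      exists_isGradedSimple_annihilator_eq (σ := (σ : R →+* R)) (L := L) hσ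
    refine ⟨M, _, _, { f.toAddMonoidHom with invFun := f, left_inv := hf, right_inv := hf },
      f.map_smulₛₗ, hf, hnt, hgr, ?_⟩
    ext r
    rw [hp, hann]
    rfl

/-- Let `R` be a `ℤ/2`-graded noetherian algebra over a field of characteristic ≠ 2, with
parity automorphism `σ` (graded objects are the `σ`-stable ones).  A two-sided graded
ideal `p` of `R` is graded-primitive (the annihilator of a graded-simple left `R`-module)
if and only if there exists a left primitive ideal `P` of `R` (the annihilator of a simple
left `R`-module) with `p = P ∩ σ(P)`. -/
theorem stmt_12 {k R : Type} [Field k] (hchar : (2 : k) ≠ 0)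
    [Ring R] [Algebra k R] [IsNoetherianRing R]
    (σ : R ≃ₐ[k] R) (hσ : ∀ r : R, σ (σ r) = r)
    (p : Ideal R) (hp2 : ∀ a ∈ p, ∀ r : R, a * r ∈ p) (hpσ : ∀ a ∈ p, σ a ∈ p) :
    ((∃ (M : Type) (_ : AddCommGroup M) (_ : Module R M) (σM : M ≃+ M),
        (∀ (r : R) (x : M), σM (r • x) = σ r • σM x) ∧ (∀ x : M, σM (σM x) = x) ∧
        Nontrivial M ∧
        (∀ N : Submodule R M, N ≠ ⊥ → (∀ x ∈ N, σM x ∈ N) → N = ⊤) ∧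
        Module.annihilator R M = p) ↔
      (∃ P : Ideal R,
        (∃ (L : Type) (_ : AddCommGroup L) (_ : Module R L),
          IsSimpleModule R L ∧ Module.annihilator R L = P) ∧
        ∀ x : R, x ∈ p ↔ (x ∈ P ∧ σ x ∈ P))) :=
  stmt_12_general σ hσ p
end
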